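/- arXiv:1210.2737 — 2 statements merged into one kernel-verified Lean document; each statement's English description precedes it below -/
import Mathlib

section
/- The sum extension in a 3×3 diagram: Assume a 3×3 commuting diagram of C*-algebras with exact rows e_A : A0 →a A1 →a′ A2, e_B : B0 →b B1 →b′ B2, e_C : C0 →c C1 →c′ C2 and exact columns e_i : A_i →u_i B_i →v_i C_i (i = 0,1,2). Identify A1 and B0 with their images u_1(A1) and b(B0) in B1. Then: (1) A1 + B0 := {z + w : z ∈ u_1(A1), w ∈ b(B0)} is a closed two-sided ideal of B1; (2) u_1(A1) ∩ b(B0) = u_1(a(A0)) (= b(u_0(A0))); (3) for every z ∈ A1 + B0 one has b′(z) ∈ u_2(A2) and v_1(z) ∈ c(C0), and the map Ψ : A1 + B0 → A2 ⊕ C0 determined by u_2(Ψ(z)_1) = b′(z) and c(Ψ(z)_2) = v_1(z) is a well-defined surjective *-homomorphism with kernel u_1(a(A0)); hence 0 → A0 → A1 + B0 →Ψ A2 ⊕ C0 → 0 is a short exact sequence. -/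
/-!
Formalization preamble: cones, suspensions, mapping cones of (non-unital) C*-algebras,
their concrete models inside algebras of continuous functions, and functors from
C*-algebras to abelian groups.
-/

set_option maxHeartbeats 1600000
set_option synthInstance.maxHeartbeats 800000

open scoped unitInterval CStarAlgebra

noncomputable section

namespace CStarPaper

variable {A B : Type*} [NonUnitalCStarAlgebra A] [NonUnitalCStarAlgebra B]

/-- The flip of a continuous function on the square `[0,1]²`. -/
def flip2 {A : Type*} [NonUnitalCStarAlgebra A] (f : C(I × I, A)) : C(I × I, A) :=
  f.comp ⟨Prod.swap, continuous_swap⟩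

@[simp] lemma flip2_apply (f : C(I × I, A)) (s t : I) : flip2 f (s, t) = f (t, s) := rfl

/-- The cone `CA = {f ∈ C([0,1],A) : f(0) = 0}` of a C*-algebra `A`. -/
def cone (A : Type*) [NonUnitalCStarAlgebra A] : NonUnitalStarSubalgebra ℂ C(I, A) where
  carrier := {f | f 0 = 0}
  add_mem' := by intro f g hf hg; simp_all [Set.mem_setOf_eq]
  zero_mem' := by simp [Set.mem_setOf_eq]
  mul_mem' := by intro f g hf hg; simp_all [Set.mem_setOf_eq]
  smul_mem' := by intro c f hf; simp_all [Set.mem_setOf_eq]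
  star_mem' := by intro f hf; simp_all [Set.mem_setOf_eq, map_star]

instance cone.isClosed (A : Type*) [NonUnitalCStarAlgebra A] :
    IsClosed ((cone A : Set C(I, A))) :=
  isClosed_eq (continuous_eval_const 0) continuous_const

/-- The suspension `SA = {f ∈ C([0,1],A) : f(0) = f(1) = 0}` of a C*-algebra `A`. -/
def susp (A : Type*) [NonUnitalCStarAlgebra A] : NonUnitalStarSubalgebra ℂ C(I, A) where
  carrier := {f | f 0 = 0 ∧ f 1 = 0}
  add_mem' := by intro f g hf hg; simp_all [Set.mem_setOf_eq]
  zero_mem' := by simp [Set.mem_setOf_eq]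
  mul_mem' := by intro f g hf hg; simp_all [Set.mem_setOf_eq]
  smul_mem' := by intro c f hf; simp_all [Set.mem_setOf_eq]
  star_mem' := by intro f hf; simp_all [Set.mem_setOf_eq, map_star]

instance susp.isClosed (A : Type*) [NonUnitalCStarAlgebra A] :
    IsClosed ((susp A : Set C(I, A))) := by
  have h : (susp A : Set C(I, A)) = {f | f 0 = 0} ∩ {f | f 1 = 0} := rfl
  rw [h]
  exact (isClosed_eq (continuous_eval_const 0) continuous_const).inter
    (isClosed_eq (continuous_eval_const 1) continuous_const)

/-- The mapping cone `C_φ = {(x,y) ∈ A ⊕ CB : φ(x) = y(1)}` of `φ : A → B`. -/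
def mapCone (φ : A →⋆ₙₐ[ℂ] B) : NonUnitalStarSubalgebra ℂ (A × C(I, B)) where
  carrier := {p | p.2 0 = 0 ∧ φ p.1 = p.2 1}
  add_mem' := by intro p q hp hq; simp_all [Set.mem_setOf_eq]
  zero_mem' := by simp [Set.mem_setOf_eq]
  mul_mem' := by intro p q hp hq; simp_all [Set.mem_setOf_eq]
  smul_mem' := by intro c p hp; simp_all [Set.mem_setOf_eq]
  star_mem' := by intro p hp; simp_all [Set.mem_setOf_eq, map_star]

instance mapCone.isClosed (φ : A →⋆ₙₐ[ℂ] B) :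
    IsClosed ((mapCone φ : Set (A × C(I, B)))) := by
  have h : (mapCone φ : Set (A × C(I, B)))
      = {p : A × C(I, B) | p.2 0 = 0} ∩ {p : A × C(I, B) | φ p.1 = p.2 1} := rfl
  rw [h]
  exact (isClosed_eq ((continuous_eval_const 0).comp continuous_snd) continuous_const).inter
    (isClosed_eq ((map_continuous φ).comp continuous_fst)
      ((continuous_eval_const 1).comp continuous_snd))

/-- The canonical inclusion `SA → CA`. -/
def suspIncl (A : Type*) [NonUnitalCStarAlgebra A] : ↥(susp A) →⋆ₙₐ[ℂ] ↥(cone A) where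
  toFun f := ⟨(f : C(I, A)), f.2.1⟩
  map_smul' _ _ := rfl
  map_zero' := rfl
  map_add' _ _ := rfl
  map_mul' _ _ := rfl
  map_star' _ := rfl

/-- Evaluation at `1`, as a *-homomorphism `CA → A`. -/
def coneEval (A : Type*) [NonUnitalCStarAlgebra A] : ↥(cone A) →⋆ₙₐ[ℂ] A where
  toFun f := (f : C(I, A)) 1
  map_smul' _ _ := rfl
  map_zero' := rfl
  map_add' _ _ := rfl
  map_mul' _ _ := rfl
  map_star' _ := rfl

/-- The canonical projection `π_mc : C_φ → A`, `(x,y) ↦ x`. -/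
def mapConeProj (φ : A →⋆ₙₐ[ℂ] B) : ↥(mapCone φ) →⋆ₙₐ[ℂ] A where
  toFun p := (p : A × C(I, B)).1
  map_smul' _ _ := rfl
  map_zero' := rfl
  map_add' _ _ := rfl
  map_mul' _ _ := rfl
  map_star' _ := rfl

/-- The projection `C_φ → CB`, `(x,y) ↦ y`. -/
def mapConeSnd (φ : A →⋆ₙₐ[ℂ] B) : ↥(mapCone φ) →⋆ₙₐ[ℂ] ↥(cone B) where
  toFun p := ⟨(p : A × C(I, B)).2, p.2.1⟩
  map_smul' _ _ := rfl
  map_zero' := rfl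
  map_add' _ _ := rfl
  map_mul' _ _ := rfl
  map_star' _ := rfl

/-- The canonical inclusion `ι_mc : SB → C_φ`, `g ↦ (0,g)`. -/
def mapConeIncl (φ : A →⋆ₙₐ[ℂ] B) : ↥(susp B) →⋆ₙₐ[ℂ] ↥(mapCone φ) where
  toFun g := ⟨(0, (g : C(I, B))), ⟨g.2.1, by simp [g.2.2]⟩⟩
  map_smul' c g := Subtype.ext (by simp [Prod.ext_iff])
  map_zero' := Subtype.ext (by simp [Prod.ext_iff])
  map_add' g h := Subtype.ext (by simp [Prod.ext_iff])
  map_mul' g h := Subtype.ext (by simp [Prod.ext_iff])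
  map_star' g := Subtype.ext (by simp [Prod.ext_iff])

/-- The concrete model of the suspension `S(C_φ)` of a mapping cone, inside
`C([0,1],A) × C([0,1]²,B)`. -/
def suspMapConeModel (φ : A →⋆ₙₐ[ℂ] B) :
    NonUnitalStarSubalgebra ℂ (C(I, A) × C(I × I, B)) where
  carrier := {p | p.1 0 = 0 ∧ p.1 1 = 0 ∧ (∀ t, p.2 (0, t) = 0) ∧ (∀ t, p.2 (1, t) = 0) ∧
    (∀ s, p.2 (s, 0) = 0) ∧ ∀ s, φ (p.1 s) = p.2 (s, 1)}
  add_mem' := by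
    rintro p q ⟨h1, h2, h3, h4, h5, h6⟩ ⟨g1, g2, g3, g4, g5, g6⟩
    exact ⟨by simp [h1, g1], by simp [h2, g2], fun t => by simp [h3 t, g3 t],
      fun t => by simp [h4 t, g4 t], fun s => by simp [h5 s, g5 s],
      fun s => by simp [h6 s, g6 s]⟩
  zero_mem' := ⟨by simp, by simp, fun t => by simp, fun t => by simp, fun s => by simp,
    fun s => by simp⟩
  mul_mem' := by
    rintro p q ⟨h1, h2, h3, h4, h5, h6⟩ ⟨g1, g2, g3, g4, g5, g6⟩
    exact ⟨by simp [h1, g1], by simp [h2, g2], fun t => by simp [h3 t, g3 t],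
      fun t => by simp [h4 t, g4 t], fun s => by simp [h5 s, g5 s],
      fun s => by simp [h6 s, g6 s]⟩
  smul_mem' := by
    rintro c p ⟨h1, h2, h3, h4, h5, h6⟩
    exact ⟨by simp [h1], by simp [h2], fun t => by simp [h3 t],
      fun t => by simp [h4 t], fun s => by simp [h5 s], fun s => by simp [h6 s]⟩
  star_mem' := by
    rintro p ⟨h1, h2, h3, h4, h5, h6⟩
    exact ⟨by simp [h1], by simp [h2], fun t => by simp [h3 t],
      fun t => by simp [h4 t], fun s => by simp [h5 s], fun s => by simp [map_star, h6 s]⟩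

/-- The concrete model of the mapping cone `C_{Sφ}` of the suspension of `φ`, inside
`C([0,1],A) × C([0,1]²,B)`. -/
def mapConeSuspModel (φ : A →⋆ₙₐ[ℂ] B) :
    NonUnitalStarSubalgebra ℂ (C(I, A) × C(I × I, B)) where
  carrier := {p | p.1 0 = 0 ∧ p.1 1 = 0 ∧ (∀ t, p.2 (0, t) = 0) ∧ (∀ s, p.2 (s, 0) = 0) ∧
    (∀ s, p.2 (s, 1) = 0) ∧ ∀ t, φ (p.1 t) = p.2 (1, t)}
  add_mem' := by
    rintro p q ⟨h1, h2, h3, h4, h5, h6⟩ ⟨g1, g2, g3, g4, g5, g6⟩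
    exact ⟨by simp [h1, g1], by simp [h2, g2], fun t => by simp [h3 t, g3 t],
      fun s => by simp [h4 s, g4 s], fun s => by simp [h5 s, g5 s],
      fun t => by simp [h6 t, g6 t]⟩
  zero_mem' := ⟨by simp, by simp, fun t => by simp, fun s => by simp, fun s => by simp,
    fun t => by simp⟩
  mul_mem' := by
    rintro p q ⟨h1, h2, h3, h4, h5, h6⟩ ⟨g1, g2, g3, g4, g5, g6⟩
    exact ⟨by simp [h1, g1], by simp [h2, g2], fun t => by simp [h3 t, g3 t],
      fun s => by simp [h4 s, g4 s], fun s => by simp [h5 s, g5 s],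
      fun t => by simp [h6 t, g6 t]⟩
  smul_mem' := by
    rintro c p ⟨h1, h2, h3, h4, h5, h6⟩
    exact ⟨by simp [h1], by simp [h2], fun t => by simp [h3 t],
      fun s => by simp [h4 s], fun s => by simp [h5 s], fun t => by simp [h6 t]⟩
  star_mem' := by
    rintro p ⟨h1, h2, h3, h4, h5, h6⟩
    exact ⟨by simp [h1], by simp [h2], fun t => by simp [h3 t],
      fun s => by simp [h4 s], fun s => by simp [h5 s], fun t => by simp [map_star, h6 t]⟩

/-- The concrete model of the cone `C(C_φ)` of a mapping cone, inside
`C([0,1],A) × C([0,1]²,B)`. -/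
def coneMapConeModel (φ : A →⋆ₙₐ[ℂ] B) :
    NonUnitalStarSubalgebra ℂ (C(I, A) × C(I × I, B)) where
  carrier := {p | p.1 0 = 0 ∧ (∀ t, p.2 (0, t) = 0) ∧ (∀ s, p.2 (s, 0) = 0) ∧
    ∀ s, φ (p.1 s) = p.2 (s, 1)}
  add_mem' := by
    rintro p q ⟨h1, h3, h5, h6⟩ ⟨g1, g3, g5, g6⟩
    exact ⟨by simp [h1, g1], fun t => by simp [h3 t, g3 t], fun s => by simp [h5 s, g5 s],
      fun s => by simp [h6 s, g6 s]⟩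
  zero_mem' := ⟨by simp, fun t => by simp, fun s => by simp, fun s => by simp⟩
  mul_mem' := by
    rintro p q ⟨h1, h3, h5, h6⟩ ⟨g1, g3, g5, g6⟩
    exact ⟨by simp [h1, g1], fun t => by simp [h3 t, g3 t], fun s => by simp [h5 s, g5 s],
      fun s => by simp [h6 s, g6 s]⟩
  smul_mem' := by
    rintro c p ⟨h1, h3, h5, h6⟩
    exact ⟨by simp [h1], fun t => by simp [h3 t], fun s => by simp [h5 s],
      fun s => by simp [h6 s]⟩
  star_mem' := by
    rintro p ⟨h1, h3, h5, h6⟩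
    exact ⟨by simp [h1], fun t => by simp [h3 t], fun s => by simp [h5 s],
      fun s => by simp [map_star, h6 s]⟩

/-- The concrete model of the mapping cone `C_{Cφ}` of the cone of `φ`, inside
`C([0,1],A) × C([0,1]²,B)`. -/
def mapConeConeModel (φ : A →⋆ₙₐ[ℂ] B) :
    NonUnitalStarSubalgebra ℂ (C(I, A) × C(I × I, B)) where
  carrier := {p | p.1 0 = 0 ∧ (∀ t, p.2 (0, t) = 0) ∧ (∀ s, p.2 (s, 0) = 0) ∧
    ∀ t, φ (p.1 t) = p.2 (1, t)}
  add_mem' := by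
    rintro p q ⟨h1, h3, h5, h6⟩ ⟨g1, g3, g5, g6⟩
    exact ⟨by simp [h1, g1], fun t => by simp [h3 t, g3 t], fun s => by simp [h5 s, g5 s],
      fun t => by simp [h6 t, g6 t]⟩
  zero_mem' := ⟨by simp, fun t => by simp, fun s => by simp, fun t => by simp⟩
  mul_mem' := by
    rintro p q ⟨h1, h3, h5, h6⟩ ⟨g1, g3, g5, g6⟩
    exact ⟨by simp [h1, g1], fun t => by simp [h3 t, g3 t], fun s => by simp [h5 s, g5 s],
      fun t => by simp [h6 t, g6 t]⟩
  smul_mem' := by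
    rintro c p ⟨h1, h3, h5, h6⟩
    exact ⟨by simp [h1], fun t => by simp [h3 t], fun s => by simp [h5 s],
      fun t => by simp [h6 t]⟩
  star_mem' := by
    rintro p ⟨h1, h3, h5, h6⟩
    exact ⟨by simp [h1], fun t => by simp [h3 t], fun s => by simp [h5 s],
      fun t => by simp [map_star, h6 t]⟩

variable {X Y₁ Y₂ Z : Type*} [NonUnitalCStarAlgebra X] [NonUnitalCStarAlgebra Y₁]
  [NonUnitalCStarAlgebra Y₂] [NonUnitalCStarAlgebra Z]

/-- The canonical concrete realization of the double mapping cone associated to a commuting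
square `ψ₁ ∘ φ₁ = ψ₂ ∘ φ₂`, inside `X × C([0,1],Y₁) × C([0,1],Y₂) × C([0,1]²,Z)`. -/
def dblCone (φ₁ : X →⋆ₙₐ[ℂ] Y₁) (φ₂ : X →⋆ₙₐ[ℂ] Y₂) (ψ₁ : Y₁ →⋆ₙₐ[ℂ] Z) (ψ₂ : Y₂ →⋆ₙₐ[ℂ] Z) :
    NonUnitalStarSubalgebra ℂ (X × C(I, Y₁) × C(I, Y₂) × C(I × I, Z)) where
  carrier := {p | p.2.1 0 = 0 ∧ p.2.2.1 0 = 0 ∧ (∀ t, p.2.2.2 (0, t) = 0) ∧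
    (∀ s, p.2.2.2 (s, 0) = 0) ∧ φ₁ p.1 = p.2.1 1 ∧ φ₂ p.1 = p.2.2.1 1 ∧
    (∀ t, ψ₁ (p.2.1 t) = p.2.2.2 (1, t)) ∧ ∀ s, ψ₂ (p.2.2.1 s) = p.2.2.2 (s, 1)}
  add_mem' := by
    rintro p q ⟨h1, h2, h3, h4, h5, h6, h7, h8⟩ ⟨g1, g2, g3, g4, g5, g6, g7, g8⟩
    exact ⟨by simp [h1, g1], by simp [h2, g2], fun t => by simp [h3 t, g3 t],
      fun s => by simp [h4 s, g4 s], by simp [h5, g5], by simp [h6, g6],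
      fun t => by simp [h7 t, g7 t], fun s => by simp [h8 s, g8 s]⟩
  zero_mem' := ⟨by simp, by simp, fun t => by simp, fun s => by simp, by simp, by simp,
    fun t => by simp, fun s => by simp⟩
  mul_mem' := by
    rintro p q ⟨h1, h2, h3, h4, h5, h6, h7, h8⟩ ⟨g1, g2, g3, g4, g5, g6, g7, g8⟩
    exact ⟨by simp [h1, g1], by simp [h2, g2], fun t => by simp [h3 t, g3 t],
      fun s => by simp [h4 s, g4 s], by simp [h5, g5], by simp [h6, g6],
      fun t => by simp [h7 t, g7 t], fun s => by simp [h8 s, g8 s]⟩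
  smul_mem' := by
    rintro c p ⟨h1, h2, h3, h4, h5, h6, h7, h8⟩
    exact ⟨by simp [h1], by simp [h2], fun t => by simp [h3 t], fun s => by simp [h4 s],
      by simp [h5], by simp [h6], fun t => by simp [h7 t], fun s => by simp [h8 s]⟩
  star_mem' := by
    rintro p ⟨h1, h2, h3, h4, h5, h6, h7, h8⟩
    exact ⟨by simp [h1], by simp [h2], fun t => by simp [h3 t], fun s => by simp [h4 s],
      by simp [map_star, h5], by simp [map_star, h6], fun t => by simp [map_star, h7 t],
      fun s => by simp [map_star, h8 s]⟩

/-- The pullback of two *-homomorphisms with common codomain, as a *-subalgebra of the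
direct sum. -/
def pullbackAlg {B₂ C₁ C₂ : Type*} [NonUnitalCStarAlgebra B₂] [NonUnitalCStarAlgebra C₁]
    [NonUnitalCStarAlgebra C₂] (v : B₂ →⋆ₙₐ[ℂ] C₂) (w : C₁ →⋆ₙₐ[ℂ] C₂) :
    NonUnitalStarSubalgebra ℂ (B₂ × C₁) where
  carrier := {p | v p.1 = w p.2}
  add_mem' := by intro p q hp hq; simp_all [Set.mem_setOf_eq]
  zero_mem' := by simp [Set.mem_setOf_eq]
  mul_mem' := by intro p q hp hq; simp_all [Set.mem_setOf_eq]
  smul_mem' := by intro c p hp; simp_all [Set.mem_setOf_eq]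
  star_mem' := by intro p hp; simp_all [Set.mem_setOf_eq, map_star]

/-- `ι, π` form a short exact sequence. -/
def IsShortExact {A₀ A₁ A₂ : Type*}
    [NonUnitalNonAssocSemiring A₀] [NonUnitalNonAssocSemiring A₁] [NonUnitalNonAssocSemiring A₂]
    [DistribMulAction ℂ A₀] [DistribMulAction ℂ A₁] [DistribMulAction ℂ A₂]
    [Star A₀] [Star A₁] [Star A₂]
    (ι : A₀ →⋆ₙₐ[ℂ] A₁) (π : A₁ →⋆ₙₐ[ℂ] A₂) : Prop :=
  Function.Injective ι ∧ Function.Surjective π ∧ Set.range ι = {b | π b = 0}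

/-!
The sum `A₁ + B₀` is realized as the kernel of `v₂ ∘ b' : B₁ → C₂`, which makes it a closed
two-sided *-ideal for free. If `v₂ (b' z) = 0`, exactness of the right column gives
`b' z = u₂ (a' p)`, so `z - u₁ p ∈ ker b' = b(B₀)`. The map `Ψ` is `(u₂⁻¹ ∘ b', c⁻¹ ∘ v₁)`,
defined because `u₂` and `c` are injective and `v₂ (b' z) = c' (v₁ z) = 0`; its kernel is
`ker b' ∩ ker v₁ = b(B₀) ∩ u₁(A₁)`, and an element `u₁ p` of this intersection satisfies
`u₂ (a' p) = b' (u₁ p) = 0`, hence lies in `u₁(a(A₀))`.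
-/

section StarAlgHom

variable {R E F G : Type*} [CommSemiring R]
  [NonUnitalSemiring E] [StarRing E] [Module R E]
  [NonUnitalSemiring F] [StarRing F] [Module R F]
  [NonUnitalSemiring G] [StarRing G] [Module R G]

def ker (φ : E →⋆ₙₐ[R] F) : NonUnitalStarSubalgebra R E where
  carrier := {x | φ x = 0}
  add_mem' hx hy := by simp_all
  zero_mem' := map_zero φ
  mul_mem' hx _ := by simp_all
  smul_mem' r x hx := by simp_all
  star_mem' hx := by simp_all [map_star]

@[simp] theorem mem_ker {φ : E →⋆ₙₐ[R] F} {x : E} : x ∈ ker φ ↔ φ x = 0 :=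
  Iff.rfl

theorem mul_mem_ker_left (φ : E →⋆ₙₐ[R] F) {x : E} (hx : x ∈ ker φ) (w : E) :
    w * x ∈ ker φ := by
  rw [mem_ker] at hx ⊢
  rw [map_mul, hx, mul_zero]

theorem mul_mem_ker_right (φ : E →⋆ₙₐ[R] F) {x : E} (hx : x ∈ ker φ) (w : E) :
    x * w ∈ ker φ := by
  rw [mem_ker] at hx ⊢
  rw [map_mul, hx, zero_mul]

theorem isClosed_ker {E F : Type*} [NonUnitalCStarAlgebra E] [NonUnitalCStarAlgebra F]
    (φ : E →⋆ₙₐ[ℂ] F) : IsClosed (ker φ : Set E) :=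
  isClosed_eq (map_continuous φ) continuous_const

def liftOfInjective (i : F →⋆ₙₐ[R] G) (hi : Function.Injective i)
    (f : E →⋆ₙₐ[R] G) (hf : ∀ x, f x ∈ Set.range i) : E →⋆ₙₐ[R] F :=
  (StarAlgEquiv.ofInjective' i hi).symm.toNonUnitalStarAlgHom.comp
    (NonUnitalStarAlgHom.codRestrict f (NonUnitalStarAlgHom.range i) hf)

@[simp] theorem apply_liftOfInjective (i : F →⋆ₙₐ[R] G) (hi : Function.Injective i)
    (f : E →⋆ₙₐ[R] G) (hf : ∀ x, f x ∈ Set.range i) (x : E) :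
    i (liftOfInjective i hi f hf x) = f x :=
  congrArg Subtype.val ((StarAlgEquiv.ofInjective' i hi).apply_symm_apply _)

end StarAlgHom

section IsShortExact

variable {E F G : Type*} [NonUnitalNonAssocSemiring E] [DistribMulAction ℂ E] [Star E]
  [NonUnitalNonAssocSemiring F] [DistribMulAction ℂ F] [Star F]
  [NonUnitalNonAssocSemiring G] [DistribMulAction ℂ G] [Star G]
  {ι : E →⋆ₙₐ[ℂ] F} {π : F →⋆ₙₐ[ℂ] G}

theorem IsShortExact.mem_range_iff (h : IsShortExact ι π) {y : F} :
    y ∈ Set.range ι ↔ π y = 0 :=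
  Set.ext_iff.mp h.2.2 y

theorem IsShortExact.apply_apply_eq_zero (h : IsShortExact ι π) (x : E) : π (ι x) = 0 :=
  h.mem_range_iff.mp (Set.mem_range_self x)

end IsShortExact

section ThreeByThree

variable {A₀ A₁ A₂ B₀ B₁ B₂ C₀ C₁ C₂ : Type*}
  [NonUnitalRing A₀] [StarRing A₀] [Module ℂ A₀] [NonUnitalRing A₁] [StarRing A₁] [Module ℂ A₁]
  [NonUnitalRing A₂] [StarRing A₂] [Module ℂ A₂] [NonUnitalRing B₀] [StarRing B₀] [Module ℂ B₀]
  [NonUnitalRing B₁] [StarRing B₁] [Module ℂ B₁] [NonUnitalRing B₂] [StarRing B₂] [Module ℂ B₂]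
  [NonUnitalRing C₀] [StarRing C₀] [Module ℂ C₀] [NonUnitalRing C₁] [StarRing C₁] [Module ℂ C₁]
  [NonUnitalRing C₂] [StarRing C₂] [Module ℂ C₂]
  {a : A₀ →⋆ₙₐ[ℂ] A₁} {a' : A₁ →⋆ₙₐ[ℂ] A₂} {b : B₀ →⋆ₙₐ[ℂ] B₁} {b' : B₁ →⋆ₙₐ[ℂ] B₂}
  {c : C₀ →⋆ₙₐ[ℂ] C₁} {c' : C₁ →⋆ₙₐ[ℂ] C₂} {u₀ : A₀ →⋆ₙₐ[ℂ] B₀} {v₀ : B₀ →⋆ₙₐ[ℂ] C₀}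
  {u₁ : A₁ →⋆ₙₐ[ℂ] B₁} {v₁ : B₁ →⋆ₙₐ[ℂ] C₁} {u₂ : A₂ →⋆ₙₐ[ℂ] B₂} {v₂ : B₂ →⋆ₙₐ[ℂ] C₂}

theorem range_inter_range_eq (hrA : IsShortExact a a') (hrB : IsShortExact b b')
    (hc₂ : IsShortExact u₂ v₂) (hsq₁ : ∀ p, u₁ (a p) = b (u₀ p))
    (hsq₂ : ∀ p, u₂ (a' p) = b' (u₁ p)) :
    Set.range u₁ ∩ Set.range b = Set.range fun p => u₁ (a p) := by
  ext z
  constructor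
  · rintro ⟨⟨p, rfl⟩, ⟨q, hq⟩⟩
    have hp : a' p = 0 := hc₂.1 <| by rw [hsq₂, ← hq, hrB.apply_apply_eq_zero, map_zero]
    obtain ⟨p₀, rfl⟩ := hrA.mem_range_iff.mpr hp
    exact ⟨p₀, rfl⟩
  · rintro ⟨p, rfl⟩
    exact ⟨⟨a p, rfl⟩, ⟨u₀ p, (hsq₁ p).symm⟩⟩

theorem apply_apply_eq_zero_iff_exists_add (hrA : IsShortExact a a') (hrB : IsShortExact b b')
    (hc₂ : IsShortExact u₂ v₂) (hsq₂ : ∀ p, u₂ (a' p) = b' (u₁ p)) {z : B₁} :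
    v₂ (b' z) = 0 ↔ ∃ p q, u₁ p + b q = z := by
  constructor
  · intro hz
    obtain ⟨x, hx⟩ := hc₂.mem_range_iff.mpr hz
    obtain ⟨p, rfl⟩ := hrA.2.1 x
    obtain ⟨q, hq⟩ := hrB.mem_range_iff.mpr (show b' (z - u₁ p) = 0 by
      rw [map_sub, ← hsq₂, hx, sub_self])
    exact ⟨p, q, by rw [hq, add_sub_cancel]⟩
  · rintro ⟨p, q, rfl⟩
    rw [map_add, ← hsq₂, hrB.apply_apply_eq_zero, add_zero, hc₂.apply_apply_eq_zero]

def sumExtensionMap (hrC : IsShortExact c c') (hc₂ : IsShortExact u₂ v₂)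
    (hsq₄ : ∀ q, v₂ (b' q) = c' (v₁ q)) : ker (v₂.comp b') →⋆ₙₐ[ℂ] A₂ × C₀ :=
  (liftOfInjective u₂ hc₂.1 (b'.comp (NonUnitalStarSubalgebraClass.subtype _))
      fun z => hc₂.mem_range_iff.mpr z.2).prod
    (liftOfInjective c hrC.1 (v₁.comp (NonUnitalStarSubalgebraClass.subtype _))
      fun z => hrC.mem_range_iff.mpr <| (hsq₄ z).symm.trans z.2)

section sumExtensionMap

variable (hrC : IsShortExact c c') (hc₂ : IsShortExact u₂ v₂)
  (hsq₄ : ∀ q, v₂ (b' q) = c' (v₁ q))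

theorem apply_sumExtensionMap_fst (z : ker (v₂.comp b')) :
    u₂ (sumExtensionMap hrC hc₂ hsq₄ z).1 = b' z :=
  apply_liftOfInjective ..

theorem apply_sumExtensionMap_snd (z : ker (v₂.comp b')) :
    c (sumExtensionMap hrC hc₂ hsq₄ z).2 = v₁ z :=
  apply_liftOfInjective ..

theorem sumExtensionMap_eq_zero_iff (hrA : IsShortExact a a') (hrB : IsShortExact b b')
    (hc₁ : IsShortExact u₁ v₁) (hsq₁ : ∀ p, u₁ (a p) = b (u₀ p))
    (hsq₂ : ∀ p, u₂ (a' p) = b' (u₁ p)) (z : ker (v₂.comp b')) :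
    sumExtensionMap hrC hc₂ hsq₄ z = 0 ↔ ∃ p, u₁ (a p) = z := by
  have hfst : (sumExtensionMap hrC hc₂ hsq₄ z).1 = 0 ↔ b' z = 0 := by
    rw [← apply_sumExtensionMap_fst hrC hc₂ hsq₄, map_eq_zero_iff u₂ hc₂.1]
  have hsnd : (sumExtensionMap hrC hc₂ hsq₄ z).2 = 0 ↔ v₁ z = 0 := by
    rw [← apply_sumExtensionMap_snd hrC hc₂ hsq₄, map_eq_zero_iff c hrC.1]
  rw [Prod.ext_iff, Prod.fst_zero, Prod.snd_zero, hfst, hsnd, ← hrB.mem_range_iff,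
    ← hc₁.mem_range_iff, and_comm, ← Set.mem_inter_iff,
    range_inter_range_eq hrA hrB hc₂ hsq₁ hsq₂, Set.mem_range]

theorem sumExtensionMap_surjective (hrA : IsShortExact a a') (hrB : IsShortExact b b')
    (hc₀ : IsShortExact u₀ v₀) (hc₁ : IsShortExact u₁ v₁) (hsq₂ : ∀ p, u₂ (a' p) = b' (u₁ p))
    (hsq₃ : ∀ q, v₁ (b q) = c (v₀ q)) :
    Function.Surjective (sumExtensionMap hrC hc₂ hsq₄) := by
  rintro ⟨x, y⟩
  obtain ⟨p, rfl⟩ := hrA.2.1 x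
  obtain ⟨q, rfl⟩ := hc₀.2.1 y
  have hz : u₁ p + b q ∈ ker (v₂.comp b') :=
    (apply_apply_eq_zero_iff_exists_add hrA hrB hc₂ hsq₂).mpr ⟨p, q, rfl⟩
  refine ⟨⟨u₁ p + b q, hz⟩, Prod.ext (hc₂.1 ?_) (hrC.1 ?_)⟩
  · rw [apply_sumExtensionMap_fst]
    change b' (u₁ p + b q) = u₂ (a' p)
    rw [map_add, hrB.apply_apply_eq_zero, add_zero, hsq₂]
  · rw [apply_sumExtensionMap_snd]
    change v₁ (u₁ p + b q) = c (v₀ q)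
    rw [map_add, hc₁.apply_apply_eq_zero, zero_add, hsq₃]

end sumExtensionMap

def sumExtensionIncl (hrA : IsShortExact a a') (hsq₂ : ∀ p, u₂ (a' p) = b' (u₁ p)) :
    A₀ →⋆ₙₐ[ℂ] ker (v₂.comp b') :=
  NonUnitalStarAlgHom.codRestrict (u₁.comp a) _ fun p => by
    rw [mem_ker, NonUnitalStarAlgHom.comp_apply, NonUnitalStarAlgHom.comp_apply, ← hsq₂,
      hrA.apply_apply_eq_zero, map_zero, map_zero]

theorem isShortExact_sumExtension (hrA : IsShortExact a a') (hrB : IsShortExact b b')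
    (hrC : IsShortExact c c') (hc₀ : IsShortExact u₀ v₀) (hc₁ : IsShortExact u₁ v₁)
    (hc₂ : IsShortExact u₂ v₂) (hsq₁ : ∀ p, u₁ (a p) = b (u₀ p))
    (hsq₂ : ∀ p, u₂ (a' p) = b' (u₁ p)) (hsq₃ : ∀ q, v₁ (b q) = c (v₀ q))
    (hsq₄ : ∀ q, v₂ (b' q) = c' (v₁ q)) :
    IsShortExact (sumExtensionIncl hrA hsq₂) (sumExtensionMap hrC hc₂ hsq₄) := by
  refine ⟨fun p q h => hrA.1 (hc₁.1 (congrArg Subtype.val h)),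
    sumExtensionMap_surjective hrC hc₂ hsq₄ hrA hrB hc₀ hc₁ hsq₂ hsq₃, Set.ext fun z => ?_⟩
  rw [Set.mem_ofPred_eq, sumExtensionMap_eq_zero_iff hrC hc₂ hsq₄ hrA hrB hc₁ hsq₁ hsq₂]
  exact exists_congr fun p => Subtype.ext_iff

end ThreeByThree

/-- The sum extension `0 → A₀ → A₁ + B₀ → A₂ ⊕ C₀ → 0` in a 3×3 diagram. -/
theorem statement16 {A₀ A₁ A₂ B₀ B₁ B₂ C₀ C₁ C₂ : Type*}
    [NonUnitalCStarAlgebra A₀] [NonUnitalCStarAlgebra A₁] [NonUnitalCStarAlgebra A₂]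
    [NonUnitalCStarAlgebra B₀] [NonUnitalCStarAlgebra B₁] [NonUnitalCStarAlgebra B₂]
    [NonUnitalCStarAlgebra C₀] [NonUnitalCStarAlgebra C₁] [NonUnitalCStarAlgebra C₂]
    -- exact rows
    (a : A₀ →⋆ₙₐ[ℂ] A₁) (a' : A₁ →⋆ₙₐ[ℂ] A₂) (hrA : IsShortExact a a')
    (b : B₀ →⋆ₙₐ[ℂ] B₁) (b' : B₁ →⋆ₙₐ[ℂ] B₂) (hrB : IsShortExact b b')
    (c : C₀ →⋆ₙₐ[ℂ] C₁) (c' : C₁ →⋆ₙₐ[ℂ] C₂) (hrC : IsShortExact c c')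
    -- exact columns
    (u₀ : A₀ →⋆ₙₐ[ℂ] B₀) (v₀ : B₀ →⋆ₙₐ[ℂ] C₀) (hc₀ : IsShortExact u₀ v₀)
    (u₁ : A₁ →⋆ₙₐ[ℂ] B₁) (v₁ : B₁ →⋆ₙₐ[ℂ] C₁) (hc₁ : IsShortExact u₁ v₁)
    (u₂ : A₂ →⋆ₙₐ[ℂ] B₂) (v₂ : B₂ →⋆ₙₐ[ℂ] C₂) (hc₂ : IsShortExact u₂ v₂)
    -- commuting squares
    (hsq₁ : ∀ p, u₁ (a p) = b (u₀ p)) (hsq₂ : ∀ p, u₂ (a' p) = b' (u₁ p))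
    (hsq₃ : ∀ q, v₁ (b q) = c (v₀ q)) (hsq₄ : ∀ q, v₂ (b' q) = c' (v₁ q)) :
    -- (2) `u₁(A₁) ∩ b(B₀) = u₁(a(A₀))`
    (Set.range u₁ ∩ Set.range b = Set.range fun p => u₁ (a p)) ∧
    -- (1),(3): `A₁ + B₀` is a closed two-sided ideal of `B₁`, and the induced map `Ψ` onto
    -- `A₂ ⊕ C₀` is a well-defined surjective *-homomorphism with kernel `u₁(a(A₀))`
    ∃ T : NonUnitalStarSubalgebra ℂ B₁,
      (T : Set B₁) = {z | ∃ p q, u₁ p + b q = z} ∧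
      IsClosed (T : Set B₁) ∧
      (∀ z ∈ T, ∀ w : B₁, w * z ∈ T ∧ z * w ∈ T) ∧
      ∃ (Ψ : ↥T →⋆ₙₐ[ℂ] A₂ × C₀) (j : A₀ →⋆ₙₐ[ℂ] ↥T),
        (∀ z : ↥T, u₂ (Ψ z).1 = b' z.val ∧ c (Ψ z).2 = v₁ z.val) ∧
        Function.Surjective Ψ ∧
        (∀ z : ↥T, Ψ z = 0 ↔ ∃ p, u₁ (a p) = z.val) ∧
        (∀ p, (j p).val = u₁ (a p)) ∧
        IsShortExact j Ψ := by
  refine ⟨range_inter_range_eq hrA hrB hc₂ hsq₁ hsq₂, ker (v₂.comp b'),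
    Set.ext fun z => apply_apply_eq_zero_iff_exists_add hrA hrB hc₂ hsq₂,
    isClosed_ker _, fun z hz w => ⟨mul_mem_ker_left _ hz w, mul_mem_ker_right _ hz w⟩,
    sumExtensionMap hrC hc₂ hsq₄, sumExtensionIncl hrA hsq₂,
    fun z => ⟨apply_sumExtensionMap_fst .., apply_sumExtensionMap_snd ..⟩,
    sumExtensionMap_surjective hrC hc₂ hsq₄ hrA hrB hc₀ hc₁ hsq₂ hsq₃,
    sumExtensionMap_eq_zero_iff hrC hc₂ hsq₄ hrA hrB hc₁ hsq₁ hsq₂, fun p => rfl,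
    isShortExact_sumExtension hrA hrB hrC hc₀ hc₁ hc₂ hsq₁ hsq₂ hsq₃ hsq₄⟩

end CStarPaper
end
end

section
/- The pullback extension in a 3×3 diagram: Assume a 3×3 commuting diagram of C*-algebras with exact rows e_A : A0 →a A1 →a′ A2, e_B : B0 →b B1 →b′ B2, e_C : C0 →c C1 →c′ C2 and exact columns e_i : A_i →u_i B_i →v_i C_i (i = 0,1,2). Let D := {(x, y) ∈ B2 ⊕ C1 : v_2(x) = c′(y)} be the pullback of v_2 : B2 → C2 and c′ : C1 → C2, a closed *-subalgebra of B2 ⊕ C1. Then the sequence 0 → A2 ⊕ C0 → D → C2 → 0 is exact, where the first map is (p, q) ↦ (u_2(p), c(q)) and the second map is (x, y) ↦ v_2(x): the first map is an injective *-homomorphism, the second is a surjective *-homomorphism, and the range of the first equals the kernel of the second. -/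
/-!
Formalization preamble: cones, suspensions, mapping cones of (non-unital) C*-algebras,
their concrete models inside algebras of continuous functions, and functors from
C*-algebras to abelian groups.
-/

set_option maxHeartbeats 1600000
set_option synthInstance.maxHeartbeats 800000

open scoped unitInterval CStarAlgebra

noncomputable section

namespace CStarPaper

variable {A B : Type*} [NonUnitalCStarAlgebra A] [NonUnitalCStarAlgebra B]

variable {X Y₁ Y₂ Z : Type*} [NonUnitalCStarAlgebra X] [NonUnitalCStarAlgebra Y₁]
  [NonUnitalCStarAlgebra Y₂] [NonUnitalCStarAlgebra Z]

/-!
The kernel of `D → C₂` consists of the pairs `(x, y)` with `v₂ x = 0` and `c' y = 0`, i.e. with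
`x ∈ u₂(A₂)` and `y ∈ c(C₀)`; surjectivity of `D → C₂` lifts `z ∈ C₂` first to `x ∈ B₂` along `v₂`
and then `v₂ x` to `y ∈ C₁` along `c'`.
-/

namespace IsShortExact

variable {K B Q : Type*} [NonUnitalCStarAlgebra K] [NonUnitalCStarAlgebra B]
  [NonUnitalCStarAlgebra Q] {ι : K →⋆ₙₐ[ℂ] B} {π : B →⋆ₙₐ[ℂ] Q}

lemma mem_range_iff_s17 (h : IsShortExact ι π) {y : B} : y ∈ Set.range ι ↔ π y = 0 := by
  rw [h.2.2]; rfl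

lemma map_apply_eq_zero (h : IsShortExact ι π) (x : K) : π (ι x) = 0 :=
  h.mem_range_iff_s17.mp ⟨x, rfl⟩

end IsShortExact

section Pullback

variable {K B L E Q : Type*} [NonUnitalCStarAlgebra K] [NonUnitalCStarAlgebra B]
  [NonUnitalCStarAlgebra L] [NonUnitalCStarAlgebra E] [NonUnitalCStarAlgebra Q]
  (ι : K →⋆ₙₐ[ℂ] B) (π : B →⋆ₙₐ[ℂ] Q) (κ : L →⋆ₙₐ[ℂ] E) (ρ : E →⋆ₙₐ[ℂ] Q)

def pullbackIncl (hι : ∀ x, π (ι x) = 0) (hκ : ∀ y, ρ (κ y) = 0) :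
    K × L →⋆ₙₐ[ℂ] pullbackAlg π ρ :=
  NonUnitalStarAlgHom.codRestrict
    ((ι.comp (NonUnitalStarAlgHom.fst ℂ K L)).prod (κ.comp (NonUnitalStarAlgHom.snd ℂ K L)))
    (pullbackAlg π ρ) fun p => show π (ι p.1) = ρ (κ p.2) by rw [hι, hκ]

def pullbackProj : pullbackAlg π ρ →⋆ₙₐ[ℂ] Q :=
  π.comp ((NonUnitalStarAlgHom.fst ℂ B E).comp
    (NonUnitalStarSubalgebraClass.subtype (pullbackAlg π ρ)))

variable {ι π κ ρ}

lemma injective_pullbackIncl (hι : ∀ x, π (ι x) = 0) (hκ : ∀ y, ρ (κ y) = 0)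
    (hι' : Function.Injective ι) (hκ' : Function.Injective κ) :
    Function.Injective (pullbackIncl ι π κ ρ hι hκ) := fun p q h =>
  have h' : (ι p.1, κ p.2) = (ι q.1, κ q.2) := congrArg Subtype.val h
  Prod.ext (hι' (congrArg Prod.fst h')) (hκ' (congrArg Prod.snd h'))

lemma surjective_pullbackProj (hπ : Function.Surjective π) (hρ : Function.Surjective ρ) :
    Function.Surjective (pullbackProj π ρ) := by
  intro z
  obtain ⟨x, rfl⟩ := hπ z
  obtain ⟨y, hy⟩ := hρ (π x)
  exact ⟨⟨(x, y), hy.symm⟩, rfl⟩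

lemma range_pullbackIncl (hι : IsShortExact ι π) (hκ : IsShortExact κ ρ) :
    Set.range (pullbackIncl ι π κ ρ hι.map_apply_eq_zero hκ.map_apply_eq_zero) =
      {d | pullbackProj π ρ d = 0} := by
  ext d
  constructor
  · rintro ⟨p, rfl⟩
    exact hι.map_apply_eq_zero p.1
  · intro hd
    obtain ⟨x, hx⟩ := hι.mem_range_iff_s17.mpr hd
    have hd' : ρ d.val.2 = 0 := d.property.symm.trans hd
    obtain ⟨y, hy⟩ := hκ.mem_range_iff_s17.mpr hd'
    exact ⟨(x, y), Subtype.ext (Prod.ext hx hy)⟩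

theorem isShortExact_pullbackIncl_pullbackProj (hι : IsShortExact ι π)
    (hκ : IsShortExact κ ρ) :
    IsShortExact (pullbackIncl ι π κ ρ hι.map_apply_eq_zero hκ.map_apply_eq_zero)
      (pullbackProj π ρ) :=
  ⟨injective_pullbackIncl _ _ hι.1 hκ.1, surjective_pullbackProj hι.2.1 hκ.2.1,
    range_pullbackIncl hι hκ⟩

end Pullback

theorem statement17_general {A₂ B₂ C₀ C₁ C₂ : Type*}
    [NonUnitalCStarAlgebra A₂] [NonUnitalCStarAlgebra B₂]
    [NonUnitalCStarAlgebra C₀] [NonUnitalCStarAlgebra C₁] [NonUnitalCStarAlgebra C₂]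
    -- exact rows
    (c : C₀ →⋆ₙₐ[ℂ] C₁) (c' : C₁ →⋆ₙₐ[ℂ] C₂) (hrC : IsShortExact c c')
    -- exact columns
    (u₂ : A₂ →⋆ₙₐ[ℂ] B₂) (v₂ : B₂ →⋆ₙₐ[ℂ] C₂) (hc₂ : IsShortExact u₂ v₂) :
    -- with `D = pullbackAlg v₂ c'` the pullback of `v₂ : B₂ → C₂` and `c' : C₁ → C₂`,
    -- the sequence `0 → A₂ ⊕ C₀ → D → C₂ → 0` is exact
    ∃ (j : (A₂ × C₀) →⋆ₙₐ[ℂ] ↥(pullbackAlg v₂ c'))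
      (prj : ↥(pullbackAlg v₂ c') →⋆ₙₐ[ℂ] C₂),
      (∀ p : A₂ × C₀, (j p).val = (u₂ p.1, c p.2)) ∧
      (∀ d, prj d = v₂ d.val.1) ∧
      Function.Injective j ∧
      Function.Surjective prj ∧
      Set.range j = {d | prj d = 0} :=
  ⟨_, _, fun _ => rfl, fun _ => rfl, isShortExact_pullbackIncl_pullbackProj hc₂ hrC⟩

/-- The pullback extension `0 → A₂ ⊕ C₀ → D → C₂ → 0` in a 3×3 diagram. -/
theorem statement17 {A₀ A₁ A₂ B₀ B₁ B₂ C₀ C₁ C₂ : Type*}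
    [NonUnitalCStarAlgebra A₀] [NonUnitalCStarAlgebra A₁] [NonUnitalCStarAlgebra A₂]
    [NonUnitalCStarAlgebra B₀] [NonUnitalCStarAlgebra B₁] [NonUnitalCStarAlgebra B₂]
    [NonUnitalCStarAlgebra C₀] [NonUnitalCStarAlgebra C₁] [NonUnitalCStarAlgebra C₂]
    -- exact rows
    (a : A₀ →⋆ₙₐ[ℂ] A₁) (a' : A₁ →⋆ₙₐ[ℂ] A₂) (hrA : IsShortExact a a')
    (b : B₀ →⋆ₙₐ[ℂ] B₁) (b' : B₁ →⋆ₙₐ[ℂ] B₂) (hrB : IsShortExact b b')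
    (c : C₀ →⋆ₙₐ[ℂ] C₁) (c' : C₁ →⋆ₙₐ[ℂ] C₂) (hrC : IsShortExact c c')
    -- exact columns
    (u₀ : A₀ →⋆ₙₐ[ℂ] B₀) (v₀ : B₀ →⋆ₙₐ[ℂ] C₀) (hc₀ : IsShortExact u₀ v₀)
    (u₁ : A₁ →⋆ₙₐ[ℂ] B₁) (v₁ : B₁ →⋆ₙₐ[ℂ] C₁) (hc₁ : IsShortExact u₁ v₁)
    (u₂ : A₂ →⋆ₙₐ[ℂ] B₂) (v₂ : B₂ →⋆ₙₐ[ℂ] C₂) (hc₂ : IsShortExact u₂ v₂)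
    -- commuting squares
    (hsq₁ : ∀ p, u₁ (a p) = b (u₀ p)) (hsq₂ : ∀ p, u₂ (a' p) = b' (u₁ p))
    (hsq₃ : ∀ q, v₁ (b q) = c (v₀ q)) (hsq₄ : ∀ q, v₂ (b' q) = c' (v₁ q)) :
    -- with `D = pullbackAlg v₂ c'` the pullback of `v₂ : B₂ → C₂` and `c' : C₁ → C₂`,
    -- the sequence `0 → A₂ ⊕ C₀ → D → C₂ → 0` is exact
    ∃ (j : (A₂ × C₀) →⋆ₙₐ[ℂ] ↥(pullbackAlg v₂ c'))
      (prj : ↥(pullbackAlg v₂ c') →⋆ₙₐ[ℂ] C₂),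
      (∀ p : A₂ × C₀, (j p).val = (u₂ p.1, c p.2)) ∧
      (∀ d, prj d = v₂ d.val.1) ∧
      Function.Injective j ∧
      Function.Surjective prj ∧
      Set.range j = {d | prj d = 0} :=
  statement17_general c c' hrC u₂ v₂ hc₂

end CStarPaper
end
end
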